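/- There is a lax double quasi-functor ev: Lax_hop(B,C)×B→C of type (lx,o-l), defined on cells by evaluation (ev(F,x)=F(x) for a lax double functor F and any cell x of B; ev(α,B)=α(B) and ev(b,B)=b(B) for transformations α and modifications b evaluated at objects B of B; ev(α,g)=α_g and ev(α,u)=α^u, the structure 2-cell components of the transformation α at a horizontal 1-cell g and a vertical 1-cell u of B), such that for every lax double quasi-functor H: A×B→C of type (lx,o-l) one has ev∘(Hᵗ×Id_B)=H, where Hᵗ: A→Lax_hop(B,C) is the lax double functor corresponding to H. Moreover, ev(-,B) is a strict double functor for every object B of B. -/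
import Mathlib


set_option autoImplicit false
set_option maxHeartbeats 1000000
set_option linter.unusedVariables false

/- ===================================================================
   Skeletal framework for (pseudo/strict) double categories, lax double
   functors, horizontal/vertical (op)lax transformations, modifications,
   the hom double categories Lax_hop, Lax_hlx, Dbl_hop, Dbl_hlx, and
   quasi-functors of two and of n variables (of type (lx, o-l)).
   Coherence axioms are omitted (skeleton), but all the data and the
   strictness conditions appearing in the statements are present.
   =================================================================== -/

structure DoubleCat : Type 1 where
  Obj : Type
  Hor : Obj → Obj → Type
  Ver : Obj → Obj → Type
  Cell : ∀ {A B A' B' : Obj}, Hor A B → Hor A' B' → Ver A A' → Ver B B' → Type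
  hId : ∀ A, Hor A A
  hComp : ∀ {A B C}, Hor A B → Hor B C → Hor A C
  vId : ∀ A, Ver A A
  vComp : ∀ {A B C}, Ver A B → Ver B C → Ver A C
  cellVId : ∀ {A B} (f : Hor A B), Cell f f (vId A) (vId B)
  cellHId : ∀ {A A'} (u : Ver A A'), Cell (hId A) (hId A') u u
  cellHComp : ∀ {A B C A' B' C' : Obj} {f : Hor A B} {g : Hor B C} {f' : Hor A' B'}
      {g' : Hor B' C'} {u : Ver A A'} {v : Ver B B'} {w : Ver C C'},
      Cell f f' u v → Cell g g' v w → Cell (hComp f g) (hComp f' g') u w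
  cellVComp : ∀ {A B A' B' A'' B'' : Obj} {f : Hor A B} {f' : Hor A' B'} {f'' : Hor A'' B''}
      {u : Ver A A'} {u' : Ver A' A''} {v : Ver B B'} {v' : Ver B' B''},
      Cell f f' u v → Cell f' f'' u' v' → Cell f f'' (vComp u u') (vComp v v')

namespace DoubleCat

/-- The strict associativity/unit laws of a genuine double category
    (stated separately so that skeletal constructions can use them). -/
structure StrictLaws (𝒞 : DoubleCat) : Prop where
  hAssoc : ∀ {A B C D : 𝒞.Obj} (f : 𝒞.Hor A B) (g : 𝒞.Hor B C) (k : 𝒞.Hor C D),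
      𝒞.hComp (𝒞.hComp f g) k = 𝒞.hComp f (𝒞.hComp g k)
  hIdL : ∀ {A B : 𝒞.Obj} (f : 𝒞.Hor A B), 𝒞.hComp (𝒞.hId A) f = f
  hIdR : ∀ {A B : 𝒞.Obj} (f : 𝒞.Hor A B), 𝒞.hComp f (𝒞.hId B) = f
  vAssoc : ∀ {A B C D : 𝒞.Obj} (u : 𝒞.Ver A B) (v : 𝒞.Ver B C) (w : 𝒞.Ver C D),
      𝒞.vComp (𝒞.vComp u v) w = 𝒞.vComp u (𝒞.vComp v w)
  vIdL : ∀ {A B : 𝒞.Obj} (u : 𝒞.Ver A B), 𝒞.vComp (𝒞.vId A) u = u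
  vIdR : ∀ {A B : 𝒞.Obj} (u : 𝒞.Ver A B), 𝒞.vComp u (𝒞.vId B) = u

def castCell (𝒞 : DoubleCat) {A B A' B' : 𝒞.Obj} {f f₁ : 𝒞.Hor A B} {g g₁ : 𝒞.Hor A' B'}
    {u u₁ : 𝒞.Ver A A'} {v v₁ : 𝒞.Ver B B'}
    (hf : f = f₁) (hg : g = g₁) (hu : u = u₁) (hv : v = v₁) (c : 𝒞.Cell f g u v) :
    𝒞.Cell f₁ g₁ u₁ v₁ := by subst hf hg hu hv; exact c

/-- Full sub double category on a predicate on objects. -/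
def full (𝒞 : DoubleCat) (P : 𝒞.Obj → Prop) : DoubleCat where
  Obj := {A : 𝒞.Obj // P A}
  Hor A B := 𝒞.Hor A.1 B.1
  Ver A B := 𝒞.Ver A.1 B.1
  Cell f g u v := 𝒞.Cell f g u v
  hId A := 𝒞.hId A.1
  hComp f g := 𝒞.hComp f g
  vId A := 𝒞.vId A.1
  vComp u v := 𝒞.vComp u v
  cellVId f := 𝒞.cellVId f
  cellHId u := 𝒞.cellHId u
  cellHComp c d := 𝒞.cellHComp c d
  cellVComp c d := 𝒞.cellVComp c d

end DoubleCat

/-- The data of a lax double functor with a fixed action on objects. -/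
structure LaxFunctorData (𝒟 𝒞 : DoubleCat) (obj : 𝒟.Obj → 𝒞.Obj) : Type where
  hor : ∀ {A B : 𝒟.Obj}, 𝒟.Hor A B → 𝒞.Hor (obj A) (obj B)
  ver : ∀ {A B : 𝒟.Obj}, 𝒟.Ver A B → 𝒞.Ver (obj A) (obj B)
  cell : ∀ {A B A' B' : 𝒟.Obj} {f : 𝒟.Hor A B} {g : 𝒟.Hor A' B'} {u : 𝒟.Ver A A'}
      {v : 𝒟.Ver B B'}, 𝒟.Cell f g u v → 𝒞.Cell (hor f) (hor g) (ver u) (ver v)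
  compor : ∀ {A B C : 𝒟.Obj} (f : 𝒟.Hor A B) (g : 𝒟.Hor B C),
      𝒞.Cell (𝒞.hComp (hor f) (hor g)) (hor (𝒟.hComp f g)) (𝒞.vId _) (𝒞.vId _)
  unitor : ∀ A : 𝒟.Obj, 𝒞.Cell (𝒞.hId (obj A)) (hor (𝒟.hId A)) (𝒞.vId _) (𝒞.vId _)
  ver_id : ∀ A : 𝒟.Obj, ver (𝒟.vId A) = 𝒞.vId (obj A)
  ver_comp : ∀ {A B C : 𝒟.Obj} (u : 𝒟.Ver A B) (w : 𝒟.Ver B C),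
      ver (𝒟.vComp u w) = 𝒞.vComp (ver u) (ver w)

/-- A lax double functor. -/
structure LaxDoubleFunctor (𝒟 𝒞 : DoubleCat) : Type where
  obj : 𝒟.Obj → 𝒞.Obj
  str : LaxFunctorData 𝒟 𝒞 obj

/-- A lax double functor is strict when it preserves horizontal identities and
    compositions on the nose. -/
def LaxDoubleFunctor.IsStrict {𝒟 𝒞 : DoubleCat} (F : LaxDoubleFunctor 𝒟 𝒞) : Prop :=
  (∀ A, F.str.hor (𝒟.hId A) = 𝒞.hId (F.obj A)) ∧
  (∀ {A B C : 𝒟.Obj} (f : 𝒟.Hor A B) (g : 𝒟.Hor B C),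
      F.str.hor (𝒟.hComp f g) = 𝒞.hComp (F.str.hor f) (F.str.hor g))

/- ------------------ transformations and modifications ------------------ -/

structure HorOplaxData {𝒟 𝒞 : DoubleCat} (F G : LaxDoubleFunctor 𝒟 𝒞)
    (app : ∀ A, 𝒞.Hor (F.obj A) (G.obj A)) : Type where
  horCell : ∀ {A B : 𝒟.Obj} (f : 𝒟.Hor A B),
      𝒞.Cell (𝒞.hComp (F.str.hor f) (app B)) (𝒞.hComp (app A) (G.str.hor f))
        (𝒞.vId _) (𝒞.vId _)
  verCell : ∀ {A A' : 𝒟.Obj} (u : 𝒟.Ver A A'),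
      𝒞.Cell (app A) (app A') (F.str.ver u) (G.str.ver u)

structure HorLaxData {𝒟 𝒞 : DoubleCat} (F G : LaxDoubleFunctor 𝒟 𝒞)
    (app : ∀ A, 𝒞.Hor (F.obj A) (G.obj A)) : Type where
  horCell : ∀ {A B : 𝒟.Obj} (f : 𝒟.Hor A B),
      𝒞.Cell (𝒞.hComp (app A) (G.str.hor f)) (𝒞.hComp (F.str.hor f) (app B))
        (𝒞.vId _) (𝒞.vId _)
  verCell : ∀ {A A' : 𝒟.Obj} (u : 𝒟.Ver A A'),
      𝒞.Cell (app A) (app A') (F.str.ver u) (G.str.ver u)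

structure VerLaxData {𝒟 𝒞 : DoubleCat} (F G : LaxDoubleFunctor 𝒟 𝒞)
    (app : ∀ A, 𝒞.Ver (F.obj A) (G.obj A)) : Type where
  horCell : ∀ {A B : 𝒟.Obj} (f : 𝒟.Hor A B),
      𝒞.Cell (F.str.hor f) (G.str.hor f) (app A) (app B)
  verCell : ∀ {A A' : 𝒟.Obj} (u : 𝒟.Ver A A'),
      𝒞.Cell (𝒞.hId (F.obj A)) (𝒞.hId (G.obj A'))
        (𝒞.vComp (F.str.ver u) (app A')) (𝒞.vComp (app A) (G.str.ver u))

structure VerOplaxData {𝒟 𝒞 : DoubleCat} (F G : LaxDoubleFunctor 𝒟 𝒞)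
    (app : ∀ A, 𝒞.Ver (F.obj A) (G.obj A)) : Type where
  horCell : ∀ {A B : 𝒟.Obj} (f : 𝒟.Hor A B),
      𝒞.Cell (F.str.hor f) (G.str.hor f) (app A) (app B)
  verCell : ∀ {A A' : 𝒟.Obj} (u : 𝒟.Ver A A'),
      𝒞.Cell (𝒞.hId (F.obj A)) (𝒞.hId (G.obj A'))
        (𝒞.vComp (app A) (G.str.ver u)) (𝒞.vComp (F.str.ver u) (app A'))

structure HorOplaxTrans {𝒟 𝒞 : DoubleCat} (F G : LaxDoubleFunctor 𝒟 𝒞) : Type where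
  app : ∀ A, 𝒞.Hor (F.obj A) (G.obj A)
  str : HorOplaxData F G app

structure HorLaxTrans {𝒟 𝒞 : DoubleCat} (F G : LaxDoubleFunctor 𝒟 𝒞) : Type where
  app : ∀ A, 𝒞.Hor (F.obj A) (G.obj A)
  str : HorLaxData F G app

structure VerLaxTrans {𝒟 𝒞 : DoubleCat} (F G : LaxDoubleFunctor 𝒟 𝒞) : Type where
  app : ∀ A, 𝒞.Ver (F.obj A) (G.obj A)
  str : VerLaxData F G app

structure VerOplaxTrans {𝒟 𝒞 : DoubleCat} (F G : LaxDoubleFunctor 𝒟 𝒞) : Type where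
  app : ∀ A, 𝒞.Ver (F.obj A) (G.obj A)
  str : VerOplaxData F G app

/-- Modification between horizontal oplax and vertical lax transformations. -/
structure ModHop {𝒟 𝒞 : DoubleCat} {F G F' G' : LaxDoubleFunctor 𝒟 𝒞}
    (θ : HorOplaxTrans F G) (θ' : HorOplaxTrans F' G')
    (σ : VerLaxTrans F F') (σ' : VerLaxTrans G G') : Type where
  cell : ∀ A, 𝒞.Cell (θ.app A) (θ'.app A) (σ.app A) (σ'.app A)

/-- Modification between horizontal lax and vertical oplax transformations. -/
structure ModHlx {𝒟 𝒞 : DoubleCat} {F G F' G' : LaxDoubleFunctor 𝒟 𝒞}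
    (θ : HorLaxTrans F G) (θ' : HorLaxTrans F' G')
    (σ : VerOplaxTrans F F') (σ' : VerOplaxTrans G G') : Type where
  cell : ∀ A, 𝒞.Cell (θ.app A) (θ'.app A) (σ.app A) (σ'.app A)

/- ------------------- the hom double categories ------------------- -/

/-- The double category `Lax_hop(𝔹,𝒞)` of lax double functors, horizontal oplax
    transformations, vertical lax transformations and modifications. -/
def LaxHop (𝔹 𝒞 : DoubleCat) (h : 𝒞.StrictLaws) : DoubleCat where
  Obj := LaxDoubleFunctor 𝔹 𝒞
  Hor := HorOplaxTrans
  Ver := VerLaxTrans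
  Cell θ θ' σ σ' := ModHop θ θ' σ σ'
  hId F :=
    { app := fun A => 𝒞.hId (F.obj A)
      str :=
      { horCell := fun f =>
          𝒞.castCell (h.hIdR (F.str.hor f)).symm (h.hIdL (F.str.hor f)).symm rfl rfl
            (𝒞.cellVId (F.str.hor f))
        verCell := fun u => 𝒞.cellHId (F.str.ver u) } }
  hComp := fun {F G H} θ φ =>
    { app := fun A => 𝒞.hComp (θ.app A) (φ.app A)
      str :=
      { horCell := fun {A B} f =>
          𝒞.castCell (h.hAssoc _ _ _) (h.hAssoc _ _ _).symm (h.vIdL _) (h.vIdL _)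
            (𝒞.cellVComp
              (𝒞.castCell rfl (h.hAssoc _ _ _) rfl rfl
                (𝒞.cellHComp (θ.str.horCell f) (𝒞.cellVId (φ.app B))))
              (𝒞.cellHComp (𝒞.cellVId (θ.app A)) (φ.str.horCell f)))
        verCell := fun u => 𝒞.cellHComp (θ.str.verCell u) (φ.str.verCell u) } }
  vId F :=
    { app := fun A => 𝒞.vId (F.obj A)
      str :=
      { horCell := fun f => 𝒞.cellVId (F.str.hor f)
        verCell := fun u =>
          𝒞.castCell rfl rfl (h.vIdR _).symm (h.vIdL _).symm (𝒞.cellHId (F.str.ver u)) } }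
  vComp := fun {F F' F''} σ τ =>
    { app := fun A => 𝒞.vComp (σ.app A) (τ.app A)
      str :=
      { horCell := fun f => 𝒞.cellVComp (σ.str.horCell f) (τ.str.horCell f)
        verCell := fun {A A'} u =>
          𝒞.castCell (h.hIdL _) (h.hIdL _) (h.vAssoc _ _ _) (h.vAssoc _ _ _).symm
            (𝒞.cellHComp
              (𝒞.castCell rfl rfl rfl (h.vAssoc _ _ _)
                (𝒞.cellVComp (σ.str.verCell u) (𝒞.cellHId (τ.app A'))))
              (𝒞.cellVComp (𝒞.cellHId (σ.app A)) (τ.str.verCell u))) } }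
  cellVId θ := { cell := fun A => 𝒞.cellVId (θ.app A) }
  cellHId σ := { cell := fun A => 𝒞.cellHId (σ.app A) }
  cellHComp m n := { cell := fun A => 𝒞.cellHComp (m.cell A) (n.cell A) }
  cellVComp m n := { cell := fun A => 𝒞.cellVComp (m.cell A) (n.cell A) }

/-- The double category `Lax_hlx(𝔹,𝒞)` of lax double functors, horizontal lax
    transformations, vertical oplax transformations and modifications. -/
def LaxHlx (𝔹 𝒞 : DoubleCat) (h : 𝒞.StrictLaws) : DoubleCat where
  Obj := LaxDoubleFunctor 𝔹 𝒞
  Hor := HorLaxTrans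
  Ver := VerOplaxTrans
  Cell θ θ' σ σ' := ModHlx θ θ' σ σ'
  hId F :=
    { app := fun A => 𝒞.hId (F.obj A)
      str :=
      { horCell := fun f =>
          𝒞.castCell (h.hIdL (F.str.hor f)).symm (h.hIdR (F.str.hor f)).symm rfl rfl
            (𝒞.cellVId (F.str.hor f))
        verCell := fun u => 𝒞.cellHId (F.str.ver u) } }
  hComp := fun {F G H} θ φ =>
    { app := fun A => 𝒞.hComp (θ.app A) (φ.app A)
      str :=
      { horCell := fun {A B} f =>
          𝒞.castCell (h.hAssoc _ _ _).symm (h.hAssoc _ _ _) (h.vIdL _) (h.vIdL _)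
            (𝒞.cellVComp
              (𝒞.castCell rfl (h.hAssoc _ _ _).symm rfl rfl
                (𝒞.cellHComp (𝒞.cellVId (θ.app A)) (φ.str.horCell f)))
              (𝒞.cellHComp (θ.str.horCell f) (𝒞.cellVId (φ.app B))))
        verCell := fun u => 𝒞.cellHComp (θ.str.verCell u) (φ.str.verCell u) } }
  vId F :=
    { app := fun A => 𝒞.vId (F.obj A)
      str :=
      { horCell := fun f => 𝒞.cellVId (F.str.hor f)
        verCell := fun u =>
          𝒞.castCell rfl rfl (h.vIdL _).symm (h.vIdR _).symm (𝒞.cellHId (F.str.ver u)) } }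
  vComp := fun {F F' F''} σ τ =>
    { app := fun A => 𝒞.vComp (σ.app A) (τ.app A)
      str :=
      { horCell := fun f => 𝒞.cellVComp (σ.str.horCell f) (τ.str.horCell f)
        verCell := fun {A A'} u =>
          𝒞.castCell (h.hIdL _) (h.hIdL _) (h.vAssoc _ _ _).symm (h.vAssoc _ _ _)
            (𝒞.cellHComp
              (𝒞.castCell rfl rfl rfl (h.vAssoc _ _ _).symm
                (𝒞.cellVComp (𝒞.cellHId (σ.app A)) (τ.str.verCell u)))
              (𝒞.cellVComp (σ.str.verCell u) (𝒞.cellHId (τ.app A')))) } }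
  cellVId θ := { cell := fun A => 𝒞.cellVId (θ.app A) }
  cellHId σ := { cell := fun A => 𝒞.cellHId (σ.app A) }
  cellHComp m n := { cell := fun A => 𝒞.cellHComp (m.cell A) (n.cell A) }
  cellVComp m n := { cell := fun A => 𝒞.cellVComp (m.cell A) (n.cell A) }

/-- `Dbl_hop(𝔹,𝒞)`: strict double functors, horizontal oplax transformations,
    vertical lax transformations, modifications. -/
def DblHop (𝔹 𝒞 : DoubleCat) (h : 𝒞.StrictLaws) : DoubleCat :=
  (LaxHop 𝔹 𝒞 h).full LaxDoubleFunctor.IsStrict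

/-- `Dbl_hlx(𝔹,𝒞)`: strict double functors, horizontal lax transformations,
    vertical oplax transformations, modifications. -/
def DblHlx (𝔹 𝒞 : DoubleCat) (h : 𝒞.StrictLaws) : DoubleCat :=
  (LaxHlx 𝔹 𝒞 h).full LaxDoubleFunctor.IsStrict

/- ------------------- binary quasi-functors (type (lx, o-l)) ------------------- -/

/-- A double quasi-functor `𝔸 × 𝔹 → 𝒞` of type `(lx, o-l)`: two families of lax
    double functors agreeing on objects, together with the four families of
    structure 2-cells `(k,K)`, `(k,U)`, `(u,K)` and `(u,U)`. -/
structure DblQF2 (𝔸 𝔹 𝒞 : DoubleCat) : Type where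
  obj : 𝔸.Obj → 𝔹.Obj → 𝒞.Obj
  /-- the lax double functors `(A,-) : 𝔹 → 𝒞` -/
  snd : ∀ A, LaxFunctorData 𝔹 𝒞 (obj A)
  /-- the lax double functors `(-,B) : 𝔸 → 𝒞` -/
  fst : ∀ B, LaxFunctorData 𝔸 𝒞 (fun A => obj A B)
  /-- the structure 2-cell `(k,K)` -/
  cellKk : ∀ {A A' : 𝔸.Obj} (K : 𝔸.Hor A A') {B B' : 𝔹.Obj} (k : 𝔹.Hor B B'),
      𝒞.Cell (𝒞.hComp ((snd A).hor k) ((fst B').hor K))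
             (𝒞.hComp ((fst B).hor K) ((snd A').hor k)) (𝒞.vId _) (𝒞.vId _)
  /-- the structure 2-cell `(u,K)` -/
  cellKu : ∀ {A A' : 𝔸.Obj} (K : 𝔸.Hor A A') {B B' : 𝔹.Obj} (u : 𝔹.Ver B B'),
      𝒞.Cell ((fst B).hor K) ((fst B').hor K) ((snd A).ver u) ((snd A').ver u)
  /-- the structure 2-cell `(k,U)` -/
  cellUk : ∀ {A A' : 𝔸.Obj} (U : 𝔸.Ver A A') {B B' : 𝔹.Obj} (k : 𝔹.Hor B B'),
      𝒞.Cell ((snd A).hor k) ((snd A').hor k) ((fst B).ver U) ((fst B').ver U)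
  /-- the structure 2-cell `(u,U)` -/
  cellUu : ∀ {A A' : 𝔸.Obj} (U : 𝔸.Ver A A') {B B' : 𝔹.Obj} (u : 𝔹.Ver B B'),
      𝒞.Cell (𝒞.hId (obj A B)) (𝒞.hId (obj A' B'))
        (𝒞.vComp ((snd A).ver u) ((fst B').ver U))
        (𝒞.vComp ((fst B).ver U) ((snd A').ver u))

namespace DblQF2

variable {𝔸 𝔹 𝒞 : DoubleCat}

/-- All component functors are strict: quasi-functor of type `(st, o-l)`. -/
def StrictType (Q : DblQF2 𝔸 𝔹 𝒞) : Prop :=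
  (∀ A, LaxDoubleFunctor.IsStrict ⟨Q.obj A, Q.snd A⟩) ∧
  (∀ B, LaxDoubleFunctor.IsStrict ⟨fun A => Q.obj A B, Q.fst B⟩)

/-- The component functors in the leftmost variable are strict: mixed type `((st,*),•)`. -/
def LeftStrict (Q : DblQF2 𝔸 𝔹 𝒞) : Prop :=
  ∀ B, LaxDoubleFunctor.IsStrict ⟨fun A => Q.obj A B, Q.fst B⟩

/-- The component functors in the rightmost variable are strict: mixed type `((*,st),•)`. -/
def RightStrict (Q : DblQF2 𝔸 𝔹 𝒞) : Prop :=
  ∀ A, LaxDoubleFunctor.IsStrict ⟨Q.obj A, Q.snd A⟩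

end DblQF2

/- transformations, vertical transformations and modifications of binary
   quasi-functors (horizontal oplax / vertical lax type) -/

structure DblQF2Hor {𝔸 𝔹 𝒞 : DoubleCat} (H K : DblQF2 𝔸 𝔹 𝒞) : Type where
  app : ∀ A B, 𝒞.Hor (H.obj A B) (K.obj A B)
  datA : ∀ A, HorOplaxData ⟨H.obj A, H.snd A⟩ ⟨K.obj A, K.snd A⟩ (app A)
  datB : ∀ B, HorOplaxData ⟨fun A => H.obj A B, H.fst B⟩ ⟨fun A => K.obj A B, K.fst B⟩
      (fun A => app A B)

structure DblQF2Ver {𝔸 𝔹 𝒞 : DoubleCat} (H K : DblQF2 𝔸 𝔹 𝒞) : Type where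
  app : ∀ A B, 𝒞.Ver (H.obj A B) (K.obj A B)
  datA : ∀ A, VerLaxData ⟨H.obj A, H.snd A⟩ ⟨K.obj A, K.snd A⟩ (app A)
  datB : ∀ B, VerLaxData ⟨fun A => H.obj A B, H.fst B⟩ ⟨fun A => K.obj A B, K.fst B⟩
      (fun A => app A B)

structure DblQF2Cell {𝔸 𝔹 𝒞 : DoubleCat} {H K H' K' : DblQF2 𝔸 𝔹 𝒞}
    (θ : DblQF2Hor H K) (θ' : DblQF2Hor H' K')
    (σ : DblQF2Ver H H') (σ' : DblQF2Ver K K') : Type where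
  cell : ∀ A B, 𝒞.Cell (θ.app A B) (θ'.app A B) (σ.app A B) (σ'.app A B)

/- ------------------- quasi-functors of n variables ------------------- -/

/-- A lax double quasi-functor of `n` variables (type `(lx,o-l)`), skeletally:
    an object function, one-variable lax functor data in each slot, and binary
    quasi-functors in each pair of slots, agreeing on objects. -/
structure DblQFn (ι : Type) [LinearOrder ι] [DecidableEq ι]
    (𝔸 : ι → DoubleCat) (𝒞 : DoubleCat) : Type where
  obj : (∀ i, (𝔸 i).Obj) → 𝒞.Obj
  one : ∀ (i : ι) (x : ∀ k, (𝔸 k).Obj),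
      LaxFunctorData (𝔸 i) 𝒞 (fun a => obj (Function.update x i a))
  bin : ∀ {i j : ι}, i < j → ∀ (x : ∀ k, (𝔸 k).Obj), DblQF2 (𝔸 i) (𝔸 j) 𝒞
  bin_obj : ∀ {i j : ι} (hij : i < j) (x),
      (bin hij x).obj = fun a b => obj (Function.update (Function.update x i a) j b)
  bin_snd : ∀ {i j : ι} (hij : i < j) (x) (a : (𝔸 i).Obj),
      HEq ((bin hij x).snd a) (one j (Function.update x i a))
  bin_fst : ∀ {i j : ι} (hij : i < j) (x) (b : (𝔸 j).Obj),
      HEq ((bin hij x).fst b) (one i (Function.update x j b))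

namespace DblQFn

variable {ι : Type} [LinearOrder ι] [DecidableEq ι] {𝔸 : ι → DoubleCat} {𝒞 : DoubleCat}

/-- The component functors in the variable `i₀` are strict. -/
def StrictAt (H : DblQFn ι 𝔸 𝒞) (i₀ : ι) : Prop :=
  ∀ x, LaxDoubleFunctor.IsStrict ⟨_, H.one i₀ x⟩

end DblQFn

/-- Horizontal oplax transformations of n-variable quasi-functors. -/
structure DblQFnHor {ι : Type} [LinearOrder ι] [DecidableEq ι] {𝔸 : ι → DoubleCat}
    {𝒞 : DoubleCat} (H K : DblQFn ι 𝔸 𝒞) : Type where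
  app : ∀ x, 𝒞.Hor (H.obj x) (K.obj x)
  dat : ∀ (i : ι) (x), HorOplaxData ⟨_, H.one i x⟩ ⟨_, K.one i x⟩
      (fun a => app (Function.update x i a))

/-- Vertical lax transformations of n-variable quasi-functors. -/
structure DblQFnVer {ι : Type} [LinearOrder ι] [DecidableEq ι] {𝔸 : ι → DoubleCat}
    {𝒞 : DoubleCat} (H K : DblQFn ι 𝔸 𝒞) : Type where
  app : ∀ x, 𝒞.Ver (H.obj x) (K.obj x)
  dat : ∀ (i : ι) (x), VerLaxData ⟨_, H.one i x⟩ ⟨_, K.one i x⟩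
      (fun a => app (Function.update x i a))

/-- Modifications of n-variable quasi-functors. -/
structure DblQFnCell {ι : Type} [LinearOrder ι] [DecidableEq ι] {𝔸 : ι → DoubleCat}
    {𝒞 : DoubleCat} {H K H' K' : DblQFn ι 𝔸 𝒞}
    (θ : DblQFnHor H K) (θ' : DblQFnHor H' K')
    (σ : DblQFnVer H H') (σ' : DblQFnVer K K') : Type where
  cell : ∀ x, 𝒞.Cell (θ.app x) (θ'.app x) (σ.app x) (σ'.app x)

/-- An isomorphism of the (skeletal) double categories of n-variable
    quasi-functors (restricted to the predicates `P₁`, `P₂` on objects):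
    compatible equivalences on objects, horizontal and vertical 1-cells
    and 2-cells. -/
structure DblQFnEquiv {ι₁ : Type} [LinearOrder ι₁] [DecidableEq ι₁] {𝔸₁ : ι₁ → DoubleCat}
    {𝒞₁ : DoubleCat} {ι₂ : Type} [LinearOrder ι₂] [DecidableEq ι₂] {𝔸₂ : ι₂ → DoubleCat}
    {𝒞₂ : DoubleCat} (P₁ : DblQFn ι₁ 𝔸₁ 𝒞₁ → Prop) (P₂ : DblQFn ι₂ 𝔸₂ 𝒞₂ → Prop) :
    Type where
  objE : {H : DblQFn ι₁ 𝔸₁ 𝒞₁ // P₁ H} ≃ {H : DblQFn ι₂ 𝔸₂ 𝒞₂ // P₂ H}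
  horE : ∀ H K, DblQFnHor H.1 K.1 ≃ DblQFnHor (objE H).1 (objE K).1
  verE : ∀ H K, DblQFnVer H.1 K.1 ≃ DblQFnVer (objE H).1 (objE K).1
  cellE : ∀ {H K H' K'} (θ : DblQFnHor H.1 K.1) (θ' : DblQFnHor H'.1 K'.1)
      (σ : DblQFnVer H.1 H'.1) (σ' : DblQFnVer K.1 K'.1),
      DblQFnCell θ θ' σ σ' ≃
        DblQFnCell (horE H K θ) (horE H' K' θ') (verE H H' σ) (verE K K' σ')

/- ------------------- evaluation and universal properties ------------------- -/

/-- `Ht : 𝔸 → Lax_hop(𝔹,𝒞)` corresponds (under the bijection between lax double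
    functors into the hom double category and binary quasi-functors) to the
    quasi-functor `H : 𝔸 × 𝔹 → 𝒞`, componentwise. -/
def CorrespondsHop {𝔸 𝔹 𝒞 : DoubleCat} {h𝒞 : 𝒞.StrictLaws}
    (Ht : LaxDoubleFunctor 𝔸 (LaxHop 𝔹 𝒞 h𝒞)) (H : DblQF2 𝔸 𝔹 𝒞) : Prop :=
  (∀ A B, (Ht.obj A).obj B = H.obj A B) ∧
  (∀ A, HEq (H.snd A) (Ht.obj A).str) ∧
  (∀ (A A' : 𝔸.Obj) (K : 𝔸.Hor A A') (B : 𝔹.Obj),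
      HEq ((H.fst B).hor K) ((Ht.str.hor K).app B)) ∧
  (∀ (A A' : 𝔸.Obj) (U : 𝔸.Ver A A') (B : 𝔹.Obj),
      HEq ((H.fst B).ver U) ((Ht.str.ver U).app B)) ∧
  (∀ (A B A' B' : 𝔸.Obj) (K : 𝔸.Hor A B) (L : 𝔸.Hor A' B') (U : 𝔸.Ver A A')
      (V : 𝔸.Ver B B') (ζ : 𝔸.Cell K L U V) (Bb : 𝔹.Obj),
      HEq ((H.fst Bb).cell ζ) ((Ht.str.cell ζ).cell Bb)) ∧
  (∀ (A B C : 𝔸.Obj) (K : 𝔸.Hor A B) (L : 𝔸.Hor B C) (Bb : 𝔹.Obj),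
      HEq ((H.fst Bb).compor K L) ((Ht.str.compor K L).cell Bb)) ∧
  (∀ (A : 𝔸.Obj) (B : 𝔹.Obj), HEq ((H.fst B).unitor A) ((Ht.str.unitor A).cell B)) ∧
  (∀ (A A' : 𝔸.Obj) (K : 𝔸.Hor A A') (B B' : 𝔹.Obj) (k : 𝔹.Hor B B'),
      HEq (H.cellKk K k) ((Ht.str.hor K).str.horCell k)) ∧
  (∀ (A A' : 𝔸.Obj) (K : 𝔸.Hor A A') (B B' : 𝔹.Obj) (u : 𝔹.Ver B B'),
      HEq (H.cellKu K u) ((Ht.str.hor K).str.verCell u)) ∧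
  (∀ (A A' : 𝔸.Obj) (U : 𝔸.Ver A A') (B B' : 𝔹.Obj) (k : 𝔹.Hor B B'),
      HEq (H.cellUk U k) ((Ht.str.ver U).str.horCell k)) ∧
  (∀ (A A' : 𝔸.Obj) (U : 𝔸.Ver A A') (B B' : 𝔹.Obj) (u : 𝔹.Ver B B'),
      HEq (H.cellUu U u) ((Ht.str.ver U).str.verCell u))

/-- `ev : Lax_hop(𝔹,𝒞) × 𝔹 → 𝒞` is defined on all cells by evaluation. -/
def IsEvaluationHop {𝔹 𝒞 : DoubleCat} {h𝒞 : 𝒞.StrictLaws}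
    (ev : DblQF2 (LaxHop 𝔹 𝒞 h𝒞) 𝔹 𝒞) : Prop :=
  (∀ F B, ev.obj F B = F.obj B) ∧
  (∀ F, HEq (ev.snd F) F.str) ∧
  (∀ (F G : LaxDoubleFunctor 𝔹 𝒞) (θ : HorOplaxTrans F G) (B : 𝔹.Obj),
      HEq ((ev.fst B).hor θ) (θ.app B)) ∧
  (∀ (F G : LaxDoubleFunctor 𝔹 𝒞) (σ : VerLaxTrans F G) (B : 𝔹.Obj),
      HEq ((ev.fst B).ver σ) (σ.app B)) ∧
  (∀ (F G F' G' : LaxDoubleFunctor 𝔹 𝒞) (θ : HorOplaxTrans F G) (θ' : HorOplaxTrans F' G')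
      (σ : VerLaxTrans F F') (σ' : VerLaxTrans G G') (μ : ModHop θ θ' σ σ') (B : 𝔹.Obj),
      HEq ((ev.fst B).cell (show (LaxHop 𝔹 𝒞 h𝒞).Cell θ θ' σ σ' from μ)) (μ.cell B)) ∧
  (∀ (F G : LaxDoubleFunctor 𝔹 𝒞) (θ : HorOplaxTrans F G) (B B' : 𝔹.Obj) (k : 𝔹.Hor B B'),
      HEq (ev.cellKk θ k) (θ.str.horCell k)) ∧
  (∀ (F G : LaxDoubleFunctor 𝔹 𝒞) (θ : HorOplaxTrans F G) (B B' : 𝔹.Obj) (u : 𝔹.Ver B B'),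
      HEq (ev.cellKu θ u) (θ.str.verCell u)) ∧
  (∀ (F G : LaxDoubleFunctor 𝔹 𝒞) (σ : VerLaxTrans F G) (B B' : 𝔹.Obj) (k : 𝔹.Hor B B'),
      HEq (ev.cellUk σ k) (σ.str.horCell k)) ∧
  (∀ (F G : LaxDoubleFunctor 𝔹 𝒞) (σ : VerLaxTrans F G) (B B' : 𝔹.Obj) (u : 𝔹.Ver B B'),
      HEq (ev.cellUu σ u) (σ.str.verCell u))

/-- The composite `ev ∘ (Ht × Id)` equals `H`, componentwise. -/
def EvFactorsHop {𝔸 𝔹 𝒞 : DoubleCat} {h𝒞 : 𝒞.StrictLaws}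
    (ev : DblQF2 (LaxHop 𝔹 𝒞 h𝒞) 𝔹 𝒞) (Ht : LaxDoubleFunctor 𝔸 (LaxHop 𝔹 𝒞 h𝒞))
    (H : DblQF2 𝔸 𝔹 𝒞) : Prop :=
  (∀ A B, ev.obj (Ht.obj A) B = H.obj A B) ∧
  (∀ A, HEq (ev.snd (Ht.obj A)) (H.snd A)) ∧
  (∀ (A A' : 𝔸.Obj) (K : 𝔸.Hor A A') (B : 𝔹.Obj),
      HEq ((ev.fst B).hor (Ht.str.hor K)) ((H.fst B).hor K)) ∧
  (∀ (A A' : 𝔸.Obj) (U : 𝔸.Ver A A') (B : 𝔹.Obj),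
      HEq ((ev.fst B).ver (Ht.str.ver U)) ((H.fst B).ver U)) ∧
  (∀ (A A' : 𝔸.Obj) (K : 𝔸.Hor A A') (B B' : 𝔹.Obj) (k : 𝔹.Hor B B'),
      HEq (ev.cellKk (Ht.str.hor K) k) (H.cellKk K k)) ∧
  (∀ (A A' : 𝔸.Obj) (K : 𝔸.Hor A A') (B B' : 𝔹.Obj) (u : 𝔹.Ver B B'),
      HEq (ev.cellKu (Ht.str.hor K) u) (H.cellKu K u)) ∧
  (∀ (A A' : 𝔸.Obj) (U : 𝔸.Ver A A') (B B' : 𝔹.Obj) (k : 𝔹.Hor B B'),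
      HEq (ev.cellUk (Ht.str.ver U) k) (H.cellUk U k)) ∧
  (∀ (A A' : 𝔸.Obj) (U : 𝔸.Ver A A') (B B' : 𝔹.Obj) (u : 𝔹.Ver B B'),
      HEq (ev.cellUu (Ht.str.ver U) u) (H.cellUu U u))

/-- Componentwise compatibility `ev ∘ (Ht × Id) = H` for an `n+1`-ary `H` and an
    `n`-ary `Ht` valued in `Lax_hop(𝔸 (last), 𝒞)`. -/
def EvCompatHop {n : ℕ} {𝔸 : Fin (n + 1) → DoubleCat} {𝒞 : DoubleCat} {h𝒞 : 𝒞.StrictLaws}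
    (Ht : DblQFn (Fin n) (fun i => 𝔸 i.castSucc) (LaxHop (𝔸 (Fin.last n)) 𝒞 h𝒞))
    (H : DblQFn (Fin (n + 1)) 𝔸 𝒞) : Prop :=
  (∀ x : ∀ i, (𝔸 i).Obj,
      (Ht.obj (fun i => x i.castSucc)).obj (x (Fin.last n)) = H.obj x) ∧
  (∀ (i : Fin n) (x : ∀ k, (𝔸 k).Obj) (a a' : (𝔸 i.castSucc).Obj)
      (K : (𝔸 i.castSucc).Hor a a'),
      HEq ((H.one i.castSucc x).hor K)
        (((Ht.one i (fun k => x k.castSucc)).hor K).app (x (Fin.last n)))) ∧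
  (∀ (i : Fin n) (x : ∀ k, (𝔸 k).Obj) (a a' : (𝔸 i.castSucc).Obj)
      (U : (𝔸 i.castSucc).Ver a a'),
      HEq ((H.one i.castSucc x).ver U)
        (((Ht.one i (fun k => x k.castSucc)).ver U).app (x (Fin.last n)))) ∧
  (∀ x : ∀ k, (𝔸 k).Obj,
      HEq (H.one (Fin.last n) x) ((Ht.obj (fun i => x i.castSucc)).str)) ∧
  (∀ (i j : Fin n) (hij : i < j) (x : ∀ k, (𝔸 k).Obj) (a a' : (𝔸 i.castSucc).Obj)
      (K : (𝔸 i.castSucc).Hor a a') (b b' : (𝔸 j.castSucc).Obj)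
      (k : (𝔸 j.castSucc).Hor b b'),
      HEq ((H.bin (Fin.castSucc_lt_castSucc_iff.mpr hij) x).cellKk K k)
        (((Ht.bin hij (fun k' => x k'.castSucc)).cellKk K k).cell (x (Fin.last n)))) ∧
  (∀ (i : Fin n) (x : ∀ k, (𝔸 k).Obj) (a a' : (𝔸 i.castSucc).Obj)
      (K : (𝔸 i.castSucc).Hor a a') (b b' : (𝔸 (Fin.last n)).Obj)
      (k : (𝔸 (Fin.last n)).Hor b b'),
      HEq ((H.bin (Fin.castSucc_lt_last i) x).cellKk K k)
        (((Ht.one i (fun k' => x k'.castSucc)).hor K).str.horCell k))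

/-- `G ∘ J = H` componentwise, for a strict double functor `G` out of a
    candidate tensor product `T`. -/
def QF2Factor {𝔸 𝔹 T 𝒞 : DoubleCat} (J : DblQF2 𝔸 𝔹 T)
    (G : LaxDoubleFunctor T 𝒞) (H : DblQF2 𝔸 𝔹 𝒞) : Prop :=
  (∀ a b, G.obj (J.obj a b) = H.obj a b) ∧
  (∀ (a : 𝔸.Obj) (B B' : 𝔹.Obj) (k : 𝔹.Hor B B'),
      HEq ((H.snd a).hor k) (G.str.hor ((J.snd a).hor k))) ∧
  (∀ (a : 𝔸.Obj) (B B' : 𝔹.Obj) (u : 𝔹.Ver B B'),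
      HEq ((H.snd a).ver u) (G.str.ver ((J.snd a).ver u))) ∧
  (∀ (b : 𝔹.Obj) (A A' : 𝔸.Obj) (K : 𝔸.Hor A A'),
      HEq ((H.fst b).hor K) (G.str.hor ((J.fst b).hor K))) ∧
  (∀ (b : 𝔹.Obj) (A A' : 𝔸.Obj) (U : 𝔸.Ver A A'),
      HEq ((H.fst b).ver U) (G.str.ver ((J.fst b).ver U))) ∧
  (∀ (A A' : 𝔸.Obj) (K : 𝔸.Hor A A') (B B' : 𝔹.Obj) (k : 𝔹.Hor B B'),
      HEq (H.cellKk K k) (G.str.cell (J.cellKk K k))) ∧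
  (∀ (A A' : 𝔸.Obj) (K : 𝔸.Hor A A') (B B' : 𝔹.Obj) (u : 𝔹.Ver B B'),
      HEq (H.cellKu K u) (G.str.cell (J.cellKu K u))) ∧
  (∀ (A A' : 𝔸.Obj) (U : 𝔸.Ver A A') (B B' : 𝔹.Obj) (k : 𝔹.Hor B B'),
      HEq (H.cellUk U k) (G.str.cell (J.cellUk U k))) ∧
  (∀ (A A' : 𝔸.Obj) (U : 𝔸.Ver A A') (B B' : 𝔹.Obj) (u : 𝔹.Ver B B'),
      HEq (H.cellUu U u) (G.str.cell (J.cellUu U u)))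

/-- `(T, J)` is the meta-product `𝔸 ⊗^{st}_{o-l} 𝔹`: every quasi-functor of type
    `(st, o-l)` factors uniquely through a strict double functor out of `T`. -/
def IsTensorOL {𝔸 𝔹 T : DoubleCat} (J : DblQF2 𝔸 𝔹 T) : Prop :=
  J.StrictType ∧ ∀ (𝒞 : DoubleCat) (H : DblQF2 𝔸 𝔹 𝒞), H.StrictType →
    ∃! G : {F : LaxDoubleFunctor T 𝒞 // F.IsStrict}, QF2Factor J G.1 H

/-- `(T, J)` is the meta-product `𝔸 ⊗^{(st,lx)}_{o-l} 𝔹`: every quasi-functor of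
    mixed type `((st,lx), o-l)` factors uniquely through a strict double functor. -/
def IsTensorMixed {𝔸 𝔹 T : DoubleCat} (J : DblQF2 𝔸 𝔹 T) : Prop :=
  J.LeftStrict ∧ ∀ (𝒞 : DoubleCat) (H : DblQF2 𝔸 𝔹 𝒞), H.LeftStrict →
    ∃! G : {F : LaxDoubleFunctor T 𝒞 // F.IsStrict}, QF2Factor J G.1 H

/-- `(T, J)` strictifies all lax double quasi-functors (the fully weak meta-product
    `𝔸 ⊗^{lx}_{o-l} 𝔹`). -/
def IsTensorLoose {𝔸 𝔹 T : DoubleCat} (J : DblQF2 𝔸 𝔹 T) : Prop :=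
  ∀ (𝒞 : DoubleCat) (H : DblQF2 𝔸 𝔹 𝒞),
    ∃! G : {F : LaxDoubleFunctor T 𝒞 // F.IsStrict}, QF2Factor J G.1 H

/-- A levelwise isomorphism of double categories, preserving identities and
    compositions of 1-cells. -/
structure DblCatIso (𝒟 𝒞 : DoubleCat) : Type where
  objE : 𝒟.Obj ≃ 𝒞.Obj
  horE : ∀ {A B : 𝒟.Obj}, 𝒟.Hor A B ≃ 𝒞.Hor (objE A) (objE B)
  verE : ∀ {A B : 𝒟.Obj}, 𝒟.Ver A B ≃ 𝒞.Ver (objE A) (objE B)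
  cellE : ∀ {A B A' B' : 𝒟.Obj} {f : 𝒟.Hor A B} {g : 𝒟.Hor A' B'} {u : 𝒟.Ver A A'}
      {v : 𝒟.Ver B B'}, 𝒟.Cell f g u v ≃ 𝒞.Cell (horE f) (horE g) (verE u) (verE v)
  hid : ∀ A, horE (𝒟.hId A) = 𝒞.hId (objE A)
  hcomp : ∀ {A B C} (f : 𝒟.Hor A B) (g : 𝒟.Hor B C),
      horE (𝒟.hComp f g) = 𝒞.hComp (horE f) (horE g)
  vid : ∀ A, verE (𝒟.vId A) = 𝒞.vId (objE A)
  vcomp : ∀ {A B C} (u : 𝒟.Ver A B) (v : 𝒟.Ver B C),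
      verE (𝒟.vComp u v) = 𝒞.vComp (verE u) (verE v)

/- ===================== STATEMENT 3 =====================
   There is a lax double quasi-functor ev : Lax_hop(𝔹,𝒞) × 𝔹 → 𝒞 of type
   (lx, o-l), defined on cells by evaluation, such that for every lax double
   quasi-functor H : 𝔸 × 𝔹 → 𝒞 of type (lx, o-l) one has ev ∘ (Ht × Id_𝔹) = H,
   where Ht : 𝔸 → Lax_hop(𝔹,𝒞) is the lax double functor corresponding to H.
   Moreover, ev(-,B) is a strict double functor for every object B of 𝔹. -/
theorem statement3 (𝔹 𝒞 : DoubleCat) (h𝒞 : 𝒞.StrictLaws) :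
    ∃ ev : DblQF2 (LaxHop 𝔹 𝒞 h𝒞) 𝔹 𝒞,
      IsEvaluationHop ev ∧
      (∀ B : 𝔹.Obj,
        LaxDoubleFunctor.IsStrict
          (⟨fun F => ev.obj F B, ev.fst B⟩ : LaxDoubleFunctor (LaxHop 𝔹 𝒞 h𝒞) 𝒞)) ∧
      (∀ (𝔸 : DoubleCat) (H : DblQF2 𝔸 𝔹 𝒞) (Ht : LaxDoubleFunctor 𝔸 (LaxHop 𝔹 𝒞 h𝒞)),
        CorrespondsHop Ht H → EvFactorsHop ev Ht H) := by
  refine ⟨{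
    obj := fun F B => F.obj B
    snd := fun F => F.str
    fst := fun B =>
      { hor := fun θ => θ.app B
        ver := fun σ => σ.app B
        cell := fun μ => μ.cell B
        compor := fun θ φ => 𝒞.cellVId _
        unitor := fun F => 𝒞.cellVId _
        ver_id := fun F => rfl
        ver_comp := fun σ τ => rfl }
    cellKk := fun {F G} θ {B B'} k => θ.str.horCell k
    cellKu := fun {F G} θ {B B'} u => θ.str.verCell u
    cellUk := fun {F G} σ {B B'} k => σ.str.horCell k
    cellUu := fun {F G} σ {B B'} u => σ.str.verCell u }, ?_, ?_, ?_⟩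
  · exact ⟨fun F B => rfl, fun F => HEq.rfl,
      fun F G θ B => HEq.rfl, fun F G σ B => HEq.rfl,
      fun F G F' G' θ θ' σ σ' μ B => HEq.rfl,
      fun F G θ B B' k => HEq.rfl, fun F G θ B B' u => HEq.rfl,
      fun F G σ B B' k => HEq.rfl, fun F G σ B B' u => HEq.rfl⟩
  · exact fun B => ⟨fun F => rfl, fun f g => rfl⟩
  · rintro 𝔸 H Ht ⟨c1, c2, c3, c4, c5, c6, c7, c8, c9, c10, c11⟩
    exact ⟨c1, fun A => (c2 A).symm,
      fun A A' K B => (c3 A A' K B).symm,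
      fun A A' U B => (c4 A A' U B).symm,
      fun A A' K B B' k => (c8 A A' K B B' k).symm,
      fun A A' K B B' u => (c9 A A' K B B' u).symm,
      fun A A' U B B' k => (c10 A A' U B B' k).symm,
      fun A A' U B B' u => (c11 A A' U B B' u).symm⟩
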